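/- For all natural numbers a, c ≥ 0, the following identity holds in M₂(R): 2^{a+c+1}·(xv − yt)·tᵃvᶜ = [x,y,x]·(ad x)^{2a}·(ad y ad x)ᶜ. -/

import Mathlib

open Matrix MvPolynomial

noncomputable section

variable (K : Type*) [Field K] [CharZero K]

/-- The first generic traceless 2×2 matrix `x = !![x₁₁, x₁₂; x₂₁, -x₁₁]` over
`R = K[x₁₁,x₁₂,x₂₁,y₁₁,y₁₂,y₂₁]`, realized as `MvPolynomial (Fin 6) K` with
`x₁₁ = X 0, x₁₂ = X 1, x₂₁ = X 2, y₁₁ = X 3, y₁₂ = X 4, y₂₁ = X 5`. -/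
def x : Matrix (Fin 2) (Fin 2) (MvPolynomial (Fin 6) K) := !![X 0, X 1; X 2, -(X 0)]

/-- The second generic traceless 2×2 matrix `y = !![y₁₁, y₁₂; y₂₁, -y₁₁]`. -/
def y : Matrix (Fin 2) (Fin 2) (MvPolynomial (Fin 6) K) := !![X 3, X 4; X 5, -(X 3)]

/-- `t = tr(x²)`. -/
def t : MvPolynomial (Fin 6) K := (x K * x K).trace

/-- `u = tr(y²)`. -/
def u : MvPolynomial (Fin 6) K := (y K * y K).trace

/-- `v = tr(xy)`. -/
def v : MvPolynomial (Fin 6) K := (x K * y K).trace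

/-- The right adjoint action `z ↦ z(ad w) = [z,w]`. -/
def ad (w z : Matrix (Fin 2) (Fin 2) (MvPolynomial (Fin 6) K)) :
    Matrix (Fin 2) (Fin 2) (MvPolynomial (Fin 6) K) := ⁅z, w⁆

/-! Put `w = v • x - t • y`. For traceless `2 × 2` matrices `a, b` and any `c` one has
`⁅⁅a, b⁆, c⁆ = 2 (tr(bc) a - tr(ac) b)`. Hence `⁅⁅x, y⁆, x⁆ = 2 w`, and by linearity `w` is a
common eigenvector of `(ad x)²` and of `ad y ad x`, with eigenvalues `2t` and `2v`. -/

theorem Matrix.lie_lie_eq_of_trace_eq_zero {R : Type*} [CommRing R]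
    {a b c : Matrix (Fin 2) (Fin 2) R} (ha : a.trace = 0) (hb : b.trace = 0) :
    ⁅⁅a, b⁆, c⁆ = (2 : R) • ((b * c).trace • a - (a * c).trace • b) := by
  simp only [trace_fin_two] at ha hb
  rw [add_eq_zero_iff_eq_neg'] at ha hb
  ext i j
  fin_cases i <;> fin_cases j <;>
    simp [Ring.lie_def, mul_apply, trace_fin_two, ha, hb] <;> ring

theorem Function.iterate_smul_of_map_smul {R M : Type*} [CommMonoid R] [MulAction R M]
    {f : M → M} (hf : ∀ (r : R) m, f (r • m) = r • f m) {w : M} {s : R} (hw : f w = s • w)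
    (n : ℕ) (r : R) : f^[n] (r • w) = (s ^ n * r) • w := by
  induction n with
  | zero => simp
  | succ n ih => rw [iterate_succ_apply', ih, hf, hw, smul_smul, pow_succ, mul_right_comm]

-- Kept local to this section so that the bracket in `stmt_6` keeps its `Ring.instBracket` form.
section

attribute [local instance] LieRing.ofAssociativeRing

omit [CharZero K]

theorem trace_x : (x K).trace = 0 := by simp [x, trace_fin_two]

theorem trace_y : (y K).trace = 0 := by simp [y, trace_fin_two]

theorem ad_smul (w z : Matrix (Fin 2) (Fin 2) (MvPolynomial (Fin 6) K))
    (r : MvPolynomial (Fin 6) K) : ad K w (r • z) = r • ad K w z :=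
  smul_lie r z w

theorem lie_lie_x_y_x :
    ⁅⁅x K, y K⁆, x K⁆ = (2 : MvPolynomial (Fin 6) K) • (v K • x K - t K • y K) := by
  rw [Matrix.lie_lie_eq_of_trace_eq_zero (trace_x K) (trace_y K), trace_mul_comm]
  rfl

theorem ad_x_ad_x_vx_sub_ty : ad K (x K) (ad K (x K) (v K • x K - t K • y K)) =
    (2 * t K) • (v K • x K - t K • y K) := by
  have hyxx := Matrix.lie_lie_eq_of_trace_eq_zero (c := x K) (trace_y K) (trace_x K)
  simp only [ad, sub_lie, smul_lie, lie_self, zero_lie, hyxx, trace_mul_comm (y K)]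
  rw [← t, ← v]
  module

theorem ad_x_ad_y_vx_sub_ty : ad K (x K) (ad K (y K) (v K • x K - t K • y K)) =
    (2 * v K) • (v K • x K - t K • y K) := by
  have hxyx := lie_lie_x_y_x K
  simp only [ad, sub_lie, smul_lie, lie_self, zero_lie, hxyx]
  module

end

/-- For `a, c ≥ 0`: `2^{a+c+1}(xv − yt)tᵃvᶜ = [x,y,x](ad x)^{2a}(ad y ad x)ᶜ`. -/
theorem stmt_6 (a c : ℕ) :
    ((2 : MvPolynomial (Fin 6) K) ^ (a + c + 1) * t K ^ a * v K ^ c) •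
        (v K • x K - t K • y K) =
      (ad K (x K) ∘ ad K (y K))^[c] ((ad K (x K))^[2 * a] ⁅⁅x K, y K⁆, x K⁆) := by
  have ad_ad_smul (w₁ w₂) (r : MvPolynomial (Fin 6) K) (z) :
      (ad K w₁ ∘ ad K w₂) (r • z) = r • (ad K w₁ ∘ ad K w₂) z := by
    simp only [Function.comp_apply, ad_smul]
  rw [lie_lie_x_y_x, Function.iterate_mul,
    Function.iterate_smul_of_map_smul (f := (ad K (x K))^[2]) (ad_ad_smul _ _)
      (ad_x_ad_x_vx_sub_ty K),
    Function.iterate_smul_of_map_smul (ad_ad_smul _ _) (ad_x_ad_y_vx_sub_ty K)]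
  congr 1
  ring
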